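/- Let B be a positive definite n×n complex matrix and x ∈ ℂⁿ a unit vector. Then for every t ∈ [0,1], with R = max{t, 1−t}, one has ⟨Bx, x⟩^{t} ≤ (⟨Bx, x⟩^{1/2} / ⟨B^{1/2}x, x⟩)^{2R} · ⟨B^t x, x⟩. -/

import Mathlib

/-!
In an eigenbasis of `B`, `M s := ⟨Bˢx, x⟩ = ∑ᵢ |(Uᴴx)ᵢ|² λᵢˢ` is a moment function of a probability
distribution on the eigenvalues, so by Hölder it is log-convex, and `M 0 = 1`. Write `1/2` as the
convex combination of `t` (weight `(2R)⁻¹`) and the endpoint `b ∈ {0, 1}` farther from `t`; then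
`M (1/2) ^ (2R) ≤ M t * M b ^ (2R - 1)`, and `M 1 ^ t * M b ^ (2R - 1) = M 1 ^ R`, which is
the claim after clearing the denominator.
-/

open Matrix ComplexOrder

/-- Real power of a (Hermitian) matrix via the continuous functional calculus. -/
noncomputable def mrpow {n : ℕ} (A : Matrix (Fin n) (Fin n) ℂ) (t : ℝ) :
    Matrix (Fin n) (Fin n) ℂ :=
  cfc (fun x : ℝ => x ^ t) A

namespace Matrix.IsHermitian

variable {n 𝕜 : Type*} [Fintype n] [DecidableEq n] [RCLike 𝕜] {A : Matrix n n 𝕜}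

theorem re_dotProduct_cfc_mulVec (hA : A.IsHermitian) (f : ℝ → ℝ) (x : n → 𝕜) :
    RCLike.re (star x ⬝ᵥ (cfc f A *ᵥ x)) =
      ∑ i, ‖(star (hA.eigenvectorUnitary : Matrix n n 𝕜) *ᵥ x) i‖ ^ 2 * f (hA.eigenvalues i) := by
  set U : Matrix n n 𝕜 := (hA.eigenvectorUnitary : Matrix n n 𝕜)
  set y := star U *ᵥ x
  have hxU : star x ᵥ* U = star y := by
    rw [star_mulVec, star_eq_conjTranspose U, conjTranspose_conjTranspose]
  rw [hA.cfc_eq, IsHermitian.cfc, Unitary.conjStarAlgAut_apply, ← mulVec_mulVec, ← mulVec_mulVec,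
    dotProduct_mulVec, hxU, dotProduct, map_sum]
  refine Finset.sum_congr rfl fun i _ => ?_
  rw [Pi.star_apply, mulVec_diagonal, Function.comp_apply, Function.comp_apply, mul_left_comm,
    RCLike.star_def, RCLike.conj_mul, ← RCLike.ofReal_pow, ← RCLike.ofReal_mul, RCLike.ofReal_re,
    mul_comm]

end Matrix.IsHermitian

namespace Real

theorem sum_mul_rpow_convexComb_le {ι : Type*} (s : Finset ι) {w l : ι → ℝ}
    (hw : ∀ i ∈ s, 0 ≤ w i) (hl : ∀ i ∈ s, 0 < l i) {θ : ℝ} (hθ₀ : 0 ≤ θ) (hθ₁ : θ ≤ 1)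
    (a b : ℝ) :
    ∑ i ∈ s, w i * l i ^ (θ * a + (1 - θ) * b) ≤
      (∑ i ∈ s, w i * l i ^ a) ^ θ * (∑ i ∈ s, w i * l i ^ b) ^ (1 - θ) := by
  rcases hθ₀.eq_or_lt with rfl | hθ₀
  · simp
  rcases hθ₁.eq_or_lt with rfl | hθ₁
  · simp
  have hwl : ∀ c : ℝ, ∀ i ∈ s, 0 ≤ w i * l i ^ c := fun c i hi =>
    mul_nonneg (hw i hi) (rpow_nonneg (hl i hi).le c)
  have holder := inner_le_Lp_mul_Lq_of_nonneg s (HolderConjugate.inv_one_sub_inv hθ₀ hθ₁)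
    (fun i hi => rpow_nonneg (hwl a i hi) θ) (fun i hi => rpow_nonneg (hwl b i hi) (1 - θ))
  simp only [one_div, inv_inv] at holder
  rw [Finset.sum_congr rfl fun i hi => rpow_rpow_inv (hwl a i hi) hθ₀.ne',
    Finset.sum_congr rfl fun i hi => rpow_rpow_inv (hwl b i hi) (sub_pos.2 hθ₁).ne'] at holder
  refine le_of_eq_of_le (Finset.sum_congr rfl fun i hi => ?_) holder
  have hl' := (hl i hi).le
  rw [mul_rpow (hw i hi) (rpow_nonneg hl' _), mul_rpow (hw i hi) (rpow_nonneg hl' _),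
    mul_mul_mul_comm, ← rpow_add' (hw i hi) (by simp), add_sub_cancel, rpow_one,
    ← rpow_mul hl', ← rpow_mul hl', ← rpow_add (hl i hi), mul_comm a, mul_comm b]

theorem rpow_le_mul_rpow_of_le_rpow_mul_rpow {H T C p : ℝ} (hH : 0 ≤ H) (hT : 0 ≤ T)
    (hC : 0 ≤ C) (hp : 0 < p) (h : H ≤ T ^ p⁻¹ * C ^ (1 - p⁻¹)) : H ^ p ≤ T * C ^ (p - 1) := by
  calc H ^ p ≤ (T ^ p⁻¹ * C ^ (1 - p⁻¹)) ^ p := rpow_le_rpow hH h hp.le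
    _ = T * C ^ (p - 1) := by
      rw [mul_rpow (rpow_nonneg hT _) (rpow_nonneg hC _), ← rpow_mul hT, ← rpow_mul hC,
        inv_mul_cancel₀ hp.ne', rpow_one, sub_mul, one_mul, inv_mul_cancel₀ hp.ne']

theorem rpow_le_div_rpow_mul_of_logConvex {M : ℝ → ℝ} (hpos : ∀ s, 0 < M s) (hM₀ : M 0 = 1)
    (hconv : ∀ θ a b, 0 ≤ θ → θ ≤ 1 → M (θ * a + (1 - θ) * b) ≤ M a ^ θ * M b ^ (1 - θ))
    (t : ℝ) :
    M 1 ^ t ≤ (M 1 ^ (1 / 2 : ℝ) / M (1 / 2)) ^ (2 * max t (1 - t)) * M t := by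
  set R := max t (1 - t)
  have hR : 1 ≤ 2 * R := by
    have := le_max_left t (1 - t); have := le_max_right t (1 - t); linarith
  have hA := hpos 1
  have hH := hpos (1 / 2)
  have hT := hpos t
  rw [div_rpow (rpow_nonneg hA.le _) hH.le, ← rpow_mul hA.le,
    show (1 / 2 : ℝ) * (2 * R) = R by ring, div_mul_eq_mul_div, le_div_iff₀ (rpow_pos_of_pos hH _)]
  obtain ⟨b, hb, hAb⟩ : ∃ b, (2 * R)⁻¹ * t + (1 - (2 * R)⁻¹) * b = 1 / 2 ∧
      M 1 ^ t * M b ^ (2 * R - 1) = M 1 ^ R := by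
    rcases le_total t (1 / 2) with h | h
    · have hR' : R = 1 - t := max_eq_right (by linarith)
      refine ⟨1, ?_, ?_⟩
      · rw [hR']; field_simp [show 1 - t ≠ 0 by linarith]; ring
      · rw [← rpow_add hA, hR']; ring_nf
    · have hR' : R = t := max_eq_left (by linarith)
      refine ⟨0, ?_, ?_⟩
      · rw [hR']; field_simp [show t ≠ 0 by linarith]; ring
      · rw [hM₀, one_rpow, mul_one, hR']
  have hHT : M (1 / 2) ^ (2 * R) ≤ M t * M b ^ (2 * R - 1) := by
    refine rpow_le_mul_rpow_of_le_rpow_mul_rpow hH.le hT.le (hpos b).le (by linarith) ?_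
    simpa only [hb] using hconv (2 * R)⁻¹ t b (by positivity) (inv_le_one_of_one_le₀ hR)
  calc M 1 ^ t * M (1 / 2) ^ (2 * R) ≤ M 1 ^ t * (M t * M b ^ (2 * R - 1)) := by gcongr
    _ = M 1 ^ R * M t := by rw [← hAb]; ring

end Real

theorem stmt5 (n : ℕ) (B : Matrix (Fin n) (Fin n) ℂ) (hB : B.PosDef)
    (x : Fin n → ℂ) (hx : star x ⬝ᵥ x = 1)
    (t : ℝ) (R : ℝ) (hR : R = max t (1 - t)) :
    (star x ⬝ᵥ (B *ᵥ x)).re ^ t ≤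
      ((star x ⬝ᵥ (B *ᵥ x)).re ^ (1 / 2 : ℝ) / (star x ⬝ᵥ (mrpow B (1 / 2) *ᵥ x)).re) ^ (2 * R) *
        (star x ⬝ᵥ (mrpow B t *ᵥ x)).re := by
  have hH := hB.isHermitian
  set w : Fin n → ℝ := fun i =>
    ‖(star (hH.eigenvectorUnitary : Matrix (Fin n) (Fin n) ℂ) *ᵥ x) i‖ ^ 2
  set l := hH.eigenvalues
  have hM : ∀ s, (star x ⬝ᵥ (mrpow B s *ᵥ x)).re = ∑ i, w i * l i ^ s := fun s =>
    hH.re_dotProduct_cfc_mulVec _ x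
  have hw : ∀ i ∈ Finset.univ, 0 ≤ w i := fun i _ => by positivity
  have hl : ∀ i ∈ Finset.univ, 0 < l i := fun i _ => hB.eigenvalues_pos i
  have hw₁ : ∑ i, w i = 1 := by
    simpa [cfc_const_one ℝ B hH.isSelfAdjoint, hx] using
      (hH.re_dotProduct_cfc_mulVec (fun _ => 1) x).symm
  have hM₁ : (star x ⬝ᵥ (B *ᵥ x)).re = ∑ i, w i * l i ^ (1 : ℝ) := by
    simpa only [mrpow, Real.rpow_one, cfc_id' ℝ B hH.isSelfAdjoint] using hM 1
  obtain ⟨i₀, -, hi₀⟩ := Finset.exists_lt_of_sum_lt (s := Finset.univ) (f := 0)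
    (by rw [hw₁]; simp)
  have hpos : ∀ s : ℝ, 0 < ∑ i, w i * l i ^ s := fun s => Finset.sum_pos'
    (fun i hi => mul_nonneg (hw i hi) (Real.rpow_nonneg (hl i hi).le s))
    ⟨i₀, Finset.mem_univ _, mul_pos hi₀ (Real.rpow_pos_of_pos (hl i₀ (Finset.mem_univ _)) s)⟩
  rw [hR, hM₁, hM, hM]
  exact Real.rpow_le_div_rpow_mul_of_logConvex hpos (by simpa using hw₁)
    (fun θ a b hθ₀ hθ₁ => Real.sum_mul_rpow_convexComb_le _ hw hl hθ₀ hθ₁ a b) t
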